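/- arXiv:1706.09708 — 2 statements merged into one kernel-verified Lean document; each statement's English description precedes it below -/
import Mathlib

section
/- Let ν ∈ ℝ^d be a nonzero vector. Then there exists an integer 1 ≤ d̃ ≤ d, a vector ν̃ ∈ ℝ^d̃ whose components are linearly independent over the rationals, and vectors v₁, ..., v_{d̃} ∈ ℤ^d such that ν = Σ_{j=1}^{d̃} ν̃_j v_j. -/
/-- any nonzero `ν ∈ ℝ^d` can be written as `ν = Σ_j ν̃_j v_j` with
`ν̃ ∈ ℝ^d̃` rationally independent and `v_j ∈ ℤ^d`. -/
theorem resonance_decomposition (d : ℕ) (ν : Fin d → ℝ) (hν : ν ≠ 0) :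
    ∃ (dt : ℕ), 1 ≤ dt ∧ dt ≤ d ∧
      ∃ (νt : Fin dt → ℝ) (v : Fin dt → (Fin d → ℤ)),
        LinearIndependent ℚ νt ∧
        ν = ∑ j, νt j • (fun i => ((v j i : ℤ) : ℝ)) := by
  obtain ⟨b, hbsub, hbspan, hbli⟩ := exists_linearIndependent ℚ (Set.range ν)
  have hbfin : b.Finite := (Set.finite_range ν).subset hbsub
  haveI : Fintype b := hbfin.fintype
  -- b is nonempty
  have hbne : Nonempty b := by
    obtain ⟨i, hi⟩ : ∃ i, ν i ≠ 0 := Function.ne_iff.mp hν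
    by_contra h
    have hbe : b = ∅ := by
      rw [Set.eq_empty_iff_forall_notMem]
      intro x hx; exact h ⟨⟨x, hx⟩⟩
    have hmem : ν i ∈ Submodule.span ℚ b :=
      hbspan ▸ Submodule.subset_span (Set.mem_range_self i)
    rw [hbe] at hmem
    simp at hmem
    exact hi hmem
  have hpos : 1 ≤ Fintype.card b := Fintype.card_pos
  -- card b ≤ d
  have hle : Fintype.card b ≤ d := by
    let f : b → Fin d := fun x => (hbsub x.2).choose
    have hf : ∀ x : b, ν (f x) = x := fun x => (hbsub x.2).choose_spec
    have hinj : Function.Injective f := by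
      intro x y hxy
      apply Subtype.ext
      rw [← hf x, ← hf y, hxy]
    simpa using Fintype.card_le_of_injective f hinj
  set dt := Fintype.card b with hdt
  let e : Fin dt ≃ b := (Fintype.equivFin b).symm
  let g : Fin dt → ℝ := fun j => (e j : ℝ)
  have hg_li : LinearIndependent ℚ g := hbli.comp e e.injective
  have hrange : Set.range g = b := by
    have h1 : Set.range g = Set.range ((↑) : b → ℝ) :=
      e.surjective.range_comp _
    rw [h1, Subtype.range_coe]
  have hmem : ∀ i, ν i ∈ Submodule.span ℚ (Set.range g) := by
    intro i
    rw [hrange, hbspan]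
    exact Submodule.subset_span (Set.mem_range_self i)
  choose c hc using fun i => (Submodule.mem_span_range_iff_exists_fun ℚ).mp (hmem i)
  set N : ℤ := ∏ i : Fin d, ∏ j : Fin dt, ((c i j).den : ℤ) with hN
  have hNpos : 0 < N := by
    apply Finset.prod_pos; intro i _
    apply Finset.prod_pos; intro j _
    exact_mod_cast (c i j).pos
  have hdvd : ∀ i j, ((c i j).den : ℤ) ∣ N := fun i j =>
    dvd_trans (Finset.dvd_prod_of_mem (fun j => ((c i j).den : ℤ)) (Finset.mem_univ j))
      (Finset.dvd_prod_of_mem (fun i => ∏ j, ((c i j).den : ℤ)) (Finset.mem_univ i))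
  have key : ∀ i j, ∃ k : ℤ, ((N : ℚ)) * c i j = (k : ℚ) := by
    intro i j
    obtain ⟨t, ht⟩ := hdvd i j
    refine ⟨t * (c i j).num, ?_⟩
    have hden : ((c i j).den : ℚ) * c i j = (c i j).num := Rat.den_mul_eq_num _
    calc ((N : ℚ)) * c i j
        = ((((c i j).den : ℤ) * t : ℤ) : ℚ) * c i j := by rw [← ht]
      _ = (t : ℚ) * (((c i j).den : ℚ) * c i j) := by push_cast; ring
      _ = (t : ℚ) * (c i j).num := by rw [hden]
      _ = ((t * (c i j).num : ℤ) : ℚ) := by push_cast; ring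
  choose m hm using key
  have hNQ : (N : ℚ) ≠ 0 := by exact_mod_cast hNpos.ne'
  have hNR : (N : ℝ) ≠ 0 := by exact_mod_cast hNpos.ne'
  refine ⟨dt, hpos, hle, fun j => g j / (N : ℝ), fun j i => m i j, ?_, ?_⟩
  · have := hg_li.units_smul (fun _ => Units.mk0 ((N : ℚ)⁻¹) (inv_ne_zero hNQ))
    convert this using 1
    funext j
    show g j / (N : ℝ) = ((N : ℚ)⁻¹ : ℚ) • g j
    rw [Rat.smul_def]
    push_cast
    ring
  · funext i
    rw [Finset.sum_apply]
    rw [← hc i]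
    apply Finset.sum_congr rfl
    intro j _
    have hmj : (N : ℝ) * ((c i j : ℚ) : ℝ) = (m i j : ℝ) := by
      exact_mod_cast congrArg (fun q : ℚ => (q : ℝ)) (hm i j)
    show (c i j : ℚ) • g j = (g j / (N : ℝ)) • ((m i j : ℤ) : ℝ)
    rw [Rat.smul_def, smul_eq_mul, ← hmj]
    field_simp
end

section
/- Let K be self-adjoint with spectrum in ℕ + λ (λ > 0), A a bounded operator, A(τ) := e^{iτK} A e^{−iτK}, and ⟨A⟩ := (1/2π) ∫₀^{2π} A(τ) dτ. Then Y := (1/2π) ∫₀^{2π} τ (A − ⟨A⟩)(τ) dτ solves the homological equation i[K, Y] = A − ⟨A⟩. Moreover, if A is symmetric then so is Y. -/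
/-!
By the group law, conjugating by `U τ` translates the time variable, so
`f τ := U τ (A - ⟨A⟩) U (-τ)` is a continuous `2π`-periodic function with zero mean, and
`U τ Y U (-τ) = (1/2π) ∫₀^{2π} s f(τ + s) ds = (1/2π) ∫_τ^{τ+2π} (u - τ) f(u) du`.
The `τ`-term vanishes because `f` has zero mean over every period, and differentiating
`∫_τ^{τ+2π} u f(u) du` gives `(τ + 2π) f(τ + 2π) - τ f(τ) = 2π f(τ)`.
Self-adjointness survives unitary conjugation, real scalars and integration.
-/

open Real Function intervalIntegral
open MeasureTheory (volume)

section Periodic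

variable {F : Type*} [NormedAddCommGroup F] [NormedSpace ℝ F] {f : ℝ → F} {T : ℝ}

theorem Function.Periodic.intervalIntegral_comp_add_eq (hf : Periodic f T) (t : ℝ) :
    ∫ s in 0..T, f (t + s) = ∫ s in 0..T, f s := by
  rw [integral_comp_add_left f t, add_zero, hf.intervalIntegral_add_eq t 0, zero_add]

theorem intervalIntegral.integral_sub_one_div_smul_integral [CompleteSpace F] (hT : T ≠ 0)
    (hf : IntervalIntegrable f volume 0 T) :
    ∫ s in 0..T, (f s - (1 / T) • ∫ u in 0..T, f u) = 0 := by
  rw [integral_sub hf intervalIntegrable_const, integral_const, sub_zero, smul_smul,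
    mul_one_div_cancel hT, one_smul, sub_self]

theorem Function.Periodic.hasDerivAt_intervalIntegral_smul_comp_add [CompleteSpace F]
    (hf : Periodic f T) (hcont : Continuous f) (hmean : ∫ s in 0..T, f s = 0) (τ : ℝ) :
    HasDerivAt (fun t => ∫ s in 0..T, s • f (t + s)) (T • f τ) τ := by
  have hcont_smul : Continuous fun u => u • f u := continuous_id.smul hcont
  set G : ℝ → F := fun t => ∫ u in 0..t, u • f u
  have hG : ∀ t, HasDerivAt G (t • f t) t := fun t =>
    (hcont_smul.integral_hasStrictDerivAt 0 t).hasDerivAt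
  have hshift : ∀ t, ∫ s in 0..T, s • f (t + s) = G (t + T) - G t := by
    intro t
    calc ∫ s in 0..T, s • f (t + s)
        = (∫ s in 0..T, (t + s) • f (t + s)) - t • ∫ s in 0..T, f (t + s) := by
          rw [← integral_smul, ← integral_sub (Continuous.intervalIntegrable (by fun_prop) _ _)
            (Continuous.intervalIntegrable (by fun_prop) _ _)]
          simp only [add_smul, add_sub_cancel_left]
      _ = ∫ u in t..t + T, u • f u := by
          rw [hf.intervalIntegral_comp_add_eq, hmean, smul_zero, sub_zero,
            integral_comp_add_left (fun u => u • f u), add_zero]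
      _ = G (t + T) - G t :=
          (integral_interval_sub_left (hcont_smul.intervalIntegrable _ _)
            (hcont_smul.intervalIntegrable _ _)).symm
  have hderiv := ((hG (τ + T)).comp_add_const τ T).sub (hG τ)
  rw [hf τ, ← sub_smul, add_sub_cancel_left] at hderiv
  exact (funext hshift) ▸ hderiv

end Periodic

theorem conj_conj_of_add {M : Type*} [Monoid M] {U : ℝ → M}
    (hgroup : ∀ σ τ, U (σ + τ) = U σ * U τ) (C : M) (τ s : ℝ) :
    U τ * (U s * C * U (-s)) * U (-τ) = U (τ + s) * C * U (-(τ + s)) := by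
  rw [hgroup, neg_add_rev, hgroup]
  simp only [mul_assoc]

section BanachAlgebra

variable {R : Type*} [NormedRing R] [NormedAlgebra ℝ R] [CompleteSpace R]

theorem intervalIntegral.mul_integral_mul {f : ℝ → R} {a b : ℝ}
    (hf : IntervalIntegrable f volume a b) (x y : R) :
    x * (∫ s in a..b, f s) * y = ∫ s in a..b, x * f s * y :=
  (((ContinuousLinearMap.mul ℝ R).flip y).comp
    (ContinuousLinearMap.mul ℝ R x)).intervalIntegral_comp_comm hf |>.symm

theorem IsSelfAdjoint.intervalIntegral [StarRing R] [StarModule ℝ R] [ContinuousStar R]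
    {f : ℝ → R} {a b : ℝ} (hf : IntervalIntegrable f volume a b)
    (hsa : ∀ s, IsSelfAdjoint (f s)) : IsSelfAdjoint (∫ s in a..b, f s) := by
  have := ((starL' ℝ : R ≃L[ℝ] R) : R →L[ℝ] R).intervalIntegral_comp_comm hf
  simp only [ContinuousLinearEquiv.coe_coe, starL'_apply, fun s => (hsa s).star_eq] at this
  exact this.symm

variable {U : ℝ → R} (hgroup : ∀ σ τ, U (σ + τ) = U σ * U τ)
include hgroup

theorem conj_intervalIntegral_conj_of_periodic (hcont : Continuous U) {C : R} {T : ℝ}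
    (hper : Periodic (fun s => U s * C * U (-s)) T) (τ : ℝ) :
    U τ * (∫ s in 0..T, U s * C * U (-s)) * U (-τ) = ∫ s in 0..T, U s * C * U (-s) := by
  rw [intervalIntegral.mul_integral_mul (Continuous.intervalIntegrable (by fun_prop) _ _)]
  simp only [conj_conj_of_add hgroup]
  exact hper.intervalIntegral_comp_add_eq τ

theorem hasDerivAt_conj_intervalIntegral_smul_conj (hU0 : U 0 = 1) (hcont : Continuous U)
    {C : R} {T : ℝ} (hper : Periodic (fun s => U s * C * U (-s)) T)
    (hmean : ∫ s in 0..T, U s * C * U (-s) = 0) :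
    HasDerivAt (fun τ => U τ * (∫ s in 0..T, s • (U s * C * U (-s))) * U (-τ)) (T • C) 0 := by
  have hshift : ∀ τ, U τ * (∫ s in 0..T, s • (U s * C * U (-s))) * U (-τ)
      = ∫ s in 0..T, s • (U (τ + s) * C * U (-(τ + s))) := by
    intro τ
    rw [intervalIntegral.mul_integral_mul (f := fun s => s • (U s * C * U (-s)))
      (Continuous.intervalIntegrable (by fun_prop) _ _)]
    simp only [mul_smul_comm, smul_mul_assoc, conj_conj_of_add hgroup]
  have h := hper.hasDerivAt_intervalIntegral_smul_comp_add (by fun_prop) hmean 0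
  simp only [neg_zero, hU0, one_mul, mul_one] at h
  exact (funext hshift) ▸ h

end BanachAlgebra

/-- `Y := (1/2π) ∫₀^{2π} τ · U(τ)(A−⟨A⟩)U(−τ) dτ` solves the homological
equation `i[K, Y] = A − ⟨A⟩`, where `i[K,Y]` is interpreted as the derivative at `τ = 0`
of `τ ↦ U(τ) Y U(−τ)`; moreover `Y` is symmetric if `A` is. -/
theorem homological_equation_solution
    {E : Type*} [NormedAddCommGroup E] [InnerProductSpace ℂ E] [CompleteSpace E]
    (U : ℝ → E →L[ℂ] E) (A : E →L[ℂ] E)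
    (hU0 : U 0 = 1)
    (hgroup : ∀ σ τ : ℝ, U (σ + τ) = U σ * U τ)
    (hadj : ∀ τ : ℝ, ContinuousLinearMap.adjoint (U τ) = U (-τ))
    (hcont : Continuous U)
    (hper : ∀ (B : E →L[ℂ] E) (τ : ℝ),
      U (τ + 2 * π) * B * U (-(τ + 2 * π)) = U τ * B * U (-τ))
    (avg Y : E →L[ℂ] E)
    (havg : avg = (1 / (2 * π) : ℝ) • ∫ σ in (0:ℝ)..(2 * π), U σ * A * U (-σ))
    (hY : Y = (1 / (2 * π) : ℝ) •
      ∫ σ in (0:ℝ)..(2 * π), σ • (U σ * (A - avg) * U (-σ))) :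
    HasDerivAt (fun τ => U τ * Y * U (-τ)) (A - avg) 0 ∧
      (IsSelfAdjoint A → IsSelfAdjoint Y) := by
  have havg_inv : ∀ τ, U τ * avg * U (-τ) = avg := fun τ => by
    rw [havg, mul_smul_comm, smul_mul_assoc,
      conj_intervalIntegral_conj_of_periodic hgroup hcont (hper A) τ]
  have hmean : ∫ s in 0..2 * π, U s * (A - avg) * U (-s) = 0 := by
    simp only [mul_sub, sub_mul, havg_inv]
    exact havg ▸ intervalIntegral.integral_sub_one_div_smul_integral two_pi_pos.ne'
      (Continuous.intervalIntegrable (by fun_prop) _ _)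
  have hstar : ∀ τ, U (-τ) = star (U τ) := fun τ =>
    ((hadj τ).symm.trans (ContinuousLinearMap.star_eq_adjoint _).symm)
  refine ⟨?_, fun hA => ?_⟩
  · have h := (hasDerivAt_conj_intervalIntegral_smul_conj hgroup hU0 hcont
      (hper (A - avg)) hmean).const_smul (1 / (2 * π))
    rw [smul_smul, one_div_mul_cancel two_pi_pos.ne', one_smul] at h
    simpa only [hY, mul_smul_comm, smul_mul_assoc, Pi.smul_def] using h
  · have havg_sa : IsSelfAdjoint avg := havg ▸ (IsSelfAdjoint.all _).smul
      (.intervalIntegral (Continuous.intervalIntegrable (by fun_prop) _ _)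
        fun s => hstar s ▸ hA.conjugate (U s))
    exact hY ▸ (IsSelfAdjoint.all _).smul
      (.intervalIntegral (Continuous.intervalIntegrable (by fun_prop) _ _)
        fun s => (IsSelfAdjoint.all s).smul (hstar s ▸ (hA.sub havg_sa).conjugate (U s)))
end
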